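/- Suppose S_∞ = ∅ and σ is a finite sequence with least ordinal β(σ) such that σ ∉ S_{β(σ)}. Then any two infinite extensions f, g of σ with f, g ∈ [S_{β(σ)−1}] satisfy: f ∈ S if and only if g ∈ S. -/

import Mathlib

open Ordinal Filter Topology

/-- The first `n` values of `f` as a finite sequence. -/
def seg (f : ℕ → ℕ) (n : ℕ) : List ℕ := (List.range n).map f

/-- `[X]`: the set of infinite sequences all of whose initial segments lie in `X`. -/
def ext (X : Set (List ℕ)) : Set (ℕ → ℕ) := {f | ∀ n, seg f n ∈ X}

/-- `σ` is an initial segment of `f`. -/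
def isInit (σ : List ℕ) (f : ℕ → ℕ) : Prop := seg f σ.length = σ

/-- One step of the derivative process relative to `S`. -/
def derivStep (S : Set (ℕ → ℕ)) (X : Set (List ℕ)) : Set (List ℕ) :=
  {x ∈ X | ∃ f g : ℕ → ℕ, f ∈ ext X ∧ g ∈ ext X ∧ isInit x f ∧ isInit x g ∧ f ∈ S ∧ g ∉ S}

/-- The transfinite sequence `S_α`. -/
noncomputable def dSeq (S : Set (ℕ → ℕ)) (α : Ordinal.{0}) : Set (List ℕ) :=
  Ordinal.limitRecOn α Set.univ (fun _ X => derivStep S X)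
    (fun o _ ih => ⋂ (β : Set.Iio o), ih β.1 β.2)

/-- `α(S)`: the least ordinal where the process stabilizes. -/
noncomputable def kernelOrd (S : Set (ℕ → ℕ)) : Ordinal.{0} :=
  sInf {α | dSeq S α = dSeq S (α + 1)}

/-- `S_∞`, the kernel. -/
noncomputable def kernel (S : Set (ℕ → ℕ)) : Set (List ℕ) := dSeq S (kernelOrd S)

/-- `β(σ)`: the least ordinal `α` with `σ ∉ S_α`. -/
noncomputable def bOrd (S : Set (ℕ → ℕ)) (σ : List ℕ) : Ordinal.{0} :=
  sInf {α | σ ∉ dSeq S α}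

open Classical in
/-- `S` is guessable. -/
def Guessable (S : Set (ℕ → ℕ)) : Prop :=
  ∃ G : List ℕ → ℕ, ∀ f : ℕ → ℕ,
    Tendsto (fun n => G (seg f n)) atTop (𝓝 (if f ∈ S then 1 else 0))

/-- `Δ⁰₂`: both a countable union of closed sets and a countable intersection of open sets. -/
def IsDelta02 (S : Set (ℕ → ℕ)) : Prop :=
  (∃ F : ℕ → Set (ℕ → ℕ), (∀ n, IsClosed (F n)) ∧ S = ⋃ n, F n) ∧
  (∃ U : ℕ → Set (ℕ → ℕ), (∀ n, IsOpen (U n)) ∧ S = ⋂ n, U n)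

/-- In Lean `b - 1 = b` for every infinite ordinal `b` (as `1 + b = b`), so `b - 1 < b` forces
`b` to be a successor. -/
lemma Ordinal.sub_one_add_one_of_sub_one_lt {b : Ordinal} (h : b - 1 < b) : b - 1 + 1 = b := by
  have one_add_le_add_one : 1 + (b - 1) ≤ b - 1 + 1 := by
    rcases lt_or_ge (b - 1) ω with hfin | hinf
    · obtain ⟨n, hn⟩ := lt_omega0.1 hfin
      rw [hn, ← Nat.cast_one, ← Nat.cast_add, ← Nat.cast_add, Nat.add_comm]
    · rw [one_add_of_omega0_le hinf]
      exact le_self_add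
  exact le_antisymm (Order.add_one_le_of_lt h) ((le_add_sub b 1).trans one_add_le_add_one)

lemma dSeq_add_one (S : Set (ℕ → ℕ)) (β : Ordinal) :
    dSeq S (β + 1) = derivStep S (dSeq S β) := by
  rw [dSeq, dSeq, limitRecOn_add_one]

lemma notMem_dSeq_bOrd {S : Set (ℕ → ℕ)} {σ : List ℕ} {α : Ordinal} (h : σ ∉ dSeq S α) :
    σ ∉ dSeq S (bOrd S σ) :=
  csInf_mem (s := {α | σ ∉ dSeq S α}) ⟨α, h⟩

lemma mem_iff_mem_of_notMem_derivStep {S : Set (ℕ → ℕ)} {X : Set (List ℕ)} {x : List ℕ}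
    {f g : ℕ → ℕ} (hx : x ∈ X) (hx' : x ∉ derivStep S X) (hf : f ∈ ext X) (hg : g ∈ ext X)
    (hxf : isInit x f) (hxg : isInit x g) : f ∈ S ↔ g ∈ S := by
  have hsep : ¬ ((f ∈ S ∧ g ∉ S) ∨ (g ∈ S ∧ f ∉ S)) := by
    rintro (⟨hfS, hgS⟩ | ⟨hgS, hfS⟩)
    · exact hx' ⟨hx, f, g, hf, hg, hxf, hxg, hfS, hgS⟩
    · exact hx' ⟨hx, g, f, hg, hf, hxg, hxf, hgS, hfS⟩
  tauto

theorem stmt16 (S : Set (ℕ → ℕ)) (h : kernel S = ∅) (σ : List ℕ)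
    (f g : ℕ → ℕ) (hfσ : isInit σ f) (hgσ : isInit σ g)
    (hf : f ∈ ext (dSeq S (bOrd S σ - 1)))
    (hg : g ∈ ext (dSeq S (bOrd S σ - 1))) :
    f ∈ S ↔ g ∈ S := by
  have hσ : σ ∉ dSeq S (bOrd S σ) :=
    notMem_dSeq_bOrd (α := kernelOrd S) fun hk => (h ▸ hk : σ ∈ (∅ : Set (List ℕ)))
  have hσ' : σ ∈ dSeq S (bOrd S σ - 1) := by
    simpa only [show seg f σ.length = σ from hfσ] using hf σ.length
  have hlt : bOrd S σ - 1 < bOrd S σ := (Ordinal.sub_le_self _ _).lt_of_ne fun he => hσ (he ▸ hσ')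
  rw [← sub_one_add_one_of_sub_one_lt hlt, dSeq_add_one] at hσ
  exact mem_iff_mem_of_notMem_derivStep hσ' hσ hf hg hfσ hgσ
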